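/- Let r ≥ 1 and n ≥ 1 be integers, let W be a finite subgroup of GL_r(ℂ), and let d₁,…,d_r be positive integers with ∏_{i=1}^{r} d_i = |W|. In the field ℂ(X) of rational functions, define F = (∏_{i=1}^{r}(1−X^{2d_i})/|W|) · ∑_{w∈W} det(I+X·w)ⁿ / det(I−X²·w). Then F is regular at X = 1 and at X = −1 (i.e., the denominator of F in lowest terms does not vanish there), and F(1) = 2^{rn} while F(−1) = 0. -/

import Mathlib

/-! For `a = ±1` write `det(1 - X²w) = (1 - X²)^m(w) · q_w(X²)` with `q_w(1) ≠ 0`, where `m(w)` is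
the multiplicity of the eigenvalue `1` of `w`, and `∏ (1 - X^(2dᵢ)) = (1 - X²)^r · S` with
`S(±1) = ∏ dᵢ = |W|`. Each summand of `F` is then regular at `a`, and its value there carries the
factor `(1 - a²)^(r - m(w))`, which vanishes unless `m(w) = r`. An element of finite order is
semisimple, so `m(w) = r` forces `w = 1`. Hence `F(a) = (1 + a)^(rn)`, which is `2^(rn)` at `1`
and `0` at `-1`. -/

open scoped BigOperators

/-- The rational function
`F = (∏_{i=1}^{r}(1 - X^{2 dᵢ})/|W|) · ∑_{w ∈ W} det(I + X w)ⁿ / det(I - X² w)` in `ℂ(X)`. -/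
noncomputable def poincareRatFunc (r n : ℕ)
    (W : Subgroup (Matrix.GeneralLinearGroup (Fin r) ℂ)) [Fintype W]
    (d : Fin r → ℕ) : RatFunc ℂ :=
  algebraMap (Polynomial ℂ) (RatFunc ℂ)
      (∏ i : Fin r, (1 - (Polynomial.X : Polynomial ℂ) ^ (2 * d i))) *
    RatFunc.C ((Fintype.card W : ℂ)⁻¹) *
    ∑ w : W,
      (algebraMap (Polynomial ℂ) (RatFunc ℂ)
          (Matrix.det (1 + (Polynomial.X : Polynomial ℂ) •
            ((w : Matrix.GeneralLinearGroup (Fin r) ℂ) :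
              Matrix (Fin r) (Fin r) ℂ).map Polynomial.C))) ^ n *
        (algebraMap (Polynomial ℂ) (RatFunc ℂ)
          (Matrix.det (1 - ((Polynomial.X : Polynomial ℂ)) ^ 2 •
            ((w : Matrix.GeneralLinearGroup (Fin r) ℂ) :
              Matrix (Fin r) (Fin r) ℂ).map Polynomial.C)))⁻¹

open Polynomial

namespace Polynomial

theorem reverse_X_sub_C {R : Type*} [Ring R] (a : R) : (X - C a).reverse = 1 - C a * X := by
  nontriviality R
  rw [sub_eq_add_neg, ← C_neg, reverse_add_C, ← one_mul X, reverse_mul_X, ← C_1, reverse_C]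
  simp [sub_eq_add_neg]

theorem reverse_X_sub_C_pow {R : Type*} [Ring R] [NoZeroDivisors R] (a : R) (m : ℕ) :
    ((X - C a) ^ m).reverse = (1 - C a * X) ^ m := by
  induction m with
  | zero => rw [pow_zero, pow_zero, ← C_1, reverse_C]
  | succ m ih => rw [pow_succ, reverse_mul_of_domain, ih, reverse_X_sub_C, pow_succ]

theorem eval_one_reverse {R : Type*} [CommSemiring R] (f : R[X]) :
    f.reverse.eval 1 = f.eval 1 := by
  have : Invertible (1 : R) := invertibleOne
  simpa using eval₂_reverse_mul_pow (RingHom.id R) 1 f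

end Polynomial

namespace Matrix

variable {n K : Type*} [Fintype n] [DecidableEq n] [Field K] (M : Matrix n n K)

theorem exists_charpolyRev_eq_one_sub_X_pow_mul :
    ∃ q : K[X], q.eval 1 ≠ 0 ∧
      M.charpolyRev = (1 - X) ^ M.charpoly.rootMultiplicity 1 * q := by
  obtain ⟨q, hq, hndvd⟩ :=
    exists_eq_pow_rootMultiplicity_mul_and_not_dvd M.charpoly (charpoly_monic M).ne_zero 1
  set m := M.charpoly.rootMultiplicity 1
  refine ⟨q.reverse, fun h => hndvd (dvd_iff_isRoot.mpr ?_), ?_⟩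
  · rwa [eval_one_reverse] at h
  · rw [← reverse_charpoly, hq, reverse_mul_of_domain, reverse_X_sub_C_pow, C_1, one_mul]

theorem rootMultiplicity_charpoly_le_card (a : K) :
    M.charpoly.rootMultiplicity a ≤ Fintype.card n := by
  classical
  rw [← count_roots, ← M.charpoly_natDegree_eq_dim]
  exact (Multiset.count_le_card _ _).trans (card_roots' _)

theorem det_one_sub_smul_map_C_eq_comp {R : Type*} [CommRing R] (N : Matrix n n R) (p : R[X]) :
    det (1 - p • N.map C) = N.charpolyRev.comp p := by
  rw [charpolyRev, ← coe_compRingHom_apply, RingHom.map_det]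
  congr 1
  ext i j : 1
  by_cases h : i = j <;> simp [h, mul_comm p]

/-- The minimal polynomial of a matrix of finite order is squarefree, so that of a unipotent one
is `X - 1`. -/
theorem eq_one_of_pow_eq_one_of_rootMultiplicity_eq_card {k : ℕ} (hk : (k : K) ≠ 0)
    (hMk : M ^ k = 1) (hm : M.charpoly.rootMultiplicity 1 = Fintype.card n) : M = 1 := by
  rcases (Fintype.card n).eq_zero_or_pos with hn | hn
  · have := Fintype.card_eq_zero_iff.mp hn
    exact Subsingleton.elim _ _
  have hchar : M.charpoly = (X - C 1) ^ Fintype.card n :=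
    eq_of_monic_of_dvd_of_natDegree_le ((monic_X_sub_C 1).pow _) (charpoly_monic M)
      (hm ▸ pow_rootMultiplicity_dvd _ _)
      (by rw [charpoly_natDegree_eq_dim, (monic_X_sub_C 1).natDegree_pow, natDegree_X_sub_C,
        mul_one])
  have hsqf : Squarefree (minpoly K M) :=
    (separable_X_pow_sub_C 1 hk one_ne_zero).squarefree.squarefree_of_dvd
      (minpoly.dvd _ _ (by simp [hMk]))
  have hdvd : minpoly K M ∣ X - C 1 := by
    rw [← hsqf.dvd_pow_iff_dvd hn.ne', ← hchar]
    exact minpoly.dvd _ _ (aeval_self_charpoly M)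
  simpa [sub_eq_zero] using minpoly.dvd_iff.mp hdvd

end Matrix

namespace RatFunc

variable {K : Type*} [Field K] {a : K}

theorem eval_denom_div_algebraMap_ne_zero {N Q : K[X]} (hQ : Q.eval a ≠ 0) :
    (denom (algebraMap K[X] (RatFunc K) N / algebraMap K[X] (RatFunc K) Q)).eval a ≠ 0 := by
  have hQ0 : Q ≠ 0 := by rintro rfl; simp at hQ
  exact fun h => hQ (eval_eq_zero_of_dvd_of_eval_eq_zero ((denom_dvd hQ0).mpr ⟨N, rfl⟩) h)

theorem eval_div_algebraMap {N Q : K[X]} (hQ : Q.eval a ≠ 0) :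
    eval (RingHom.id K) a (algebraMap K[X] (RatFunc K) N / algebraMap K[X] (RatFunc K) Q) =
      N.eval a / Q.eval a := by
  have hQ0 : Q ≠ 0 := by rintro rfl; simp at hQ
  set F := algebraMap K[X] (RatFunc K) N / algebraMap K[X] (RatFunc K) Q
  have hcross : num F * Q = N * denom F := by
    apply algebraMap_injective K
    rw [map_mul, map_mul, ← div_eq_div_iff (algebraMap_ne_zero (denom_ne_zero F))
      (algebraMap_ne_zero hQ0), num_div_denom]
  rw [eval, eval₂_id, eval₂_id, div_eq_div_iff (eval_denom_div_algebraMap_ne_zero hQ) hQ,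
    ← Polynomial.eval_mul, ← Polynomial.eval_mul, hcross]

variable {ι : Type*} (s : Finset ι) (F : ι → RatFunc K)

theorem eval_denom_sum_ne_zero (h : ∀ i ∈ s, (denom (F i)).eval a ≠ 0) :
    (denom (∑ i ∈ s, F i)).eval a ≠ 0 := by
  classical
  induction s using Finset.induction_on with
  | empty => simp
  | insert i s hi ih =>
    rw [Finset.sum_insert hi]
    intro h0
    have := eval_eq_zero_of_dvd_of_eval_eq_zero (denom_add_dvd _ _) h0
    rw [Polynomial.eval_mul, mul_eq_zero] at this
    exact this.elim (h i (s.mem_insert_self i)) (ih fun j hj => h j (s.mem_insert_of_mem hj))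

theorem eval_sum (h : ∀ i ∈ s, (denom (F i)).eval a ≠ 0) :
    eval (RingHom.id K) a (∑ i ∈ s, F i) = ∑ i ∈ s, eval (RingHom.id K) a (F i) := by
  classical
  induction s using Finset.induction_on with
  | empty => simp
  | insert i s hi ih =>
    have hs : ∀ j ∈ s, (denom (F j)).eval a ≠ 0 := fun j hj => h j (s.mem_insert_of_mem hj)
    rw [Finset.sum_insert hi, Finset.sum_insert hi, ← ih hs]
    exact eval_add _ _ (h i (s.mem_insert_self i)) (eval_denom_sum_ne_zero s F hs)

end RatFunc

theorem Matrix.GeneralLinearGroup.rootMultiplicity_one_charpoly_lt {n K : Type*} [Fintype n]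
    [DecidableEq n] [Field K] [CharZero K] {g : GL n K} (hg : IsOfFinOrder g) (hne : g ≠ 1) :
    (g : Matrix n n K).charpoly.rootMultiplicity 1 < Fintype.card n := by
  refine lt_of_le_of_ne (Matrix.rootMultiplicity_charpoly_le_card _ 1) fun h => hne (Units.ext ?_)
  refine Matrix.eq_one_of_pow_eq_one_of_rootMultiplicity_eq_card _
    (Nat.cast_ne_zero.mpr hg.orderOf_pos.ne') ?_ h
  rw [← Units.val_pow_eq_pow_val, pow_orderOf_eq_one, Units.val_one]

section Poincare

variable {K : Type*} [Field K] (r n : ℕ) (d : Fin r → ℕ)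

theorem prod_one_sub_X_pow_two_mul :
    ∏ i, (1 - (X : K[X]) ^ (2 * d i)) =
      (1 - X ^ 2) ^ r * ∏ i, ∑ k ∈ Finset.range (d i), ((X : K[X]) ^ 2) ^ k := by
  simp_rw [pow_mul, ← mul_neg_geom_sum]
  rw [Finset.prod_mul_distrib, Finset.prod_const, Finset.card_univ, Fintype.card_fin]

theorem eval_prod_geom_sum {a : K} (ha : a ^ 2 = 1) :
    (∏ i, ∑ k ∈ Finset.range (d i), ((X : K[X]) ^ 2) ^ k).eval a = ∏ i, (d i : K) := by
  simp [eval_prod, eval_finsetSum, ha]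

noncomputable def poincareSummand (c : K) (M : Matrix (Fin r) (Fin r) K) : RatFunc K :=
  algebraMap K[X] (RatFunc K) (∏ i, (1 - (X : K[X]) ^ (2 * d i))) * RatFunc.C c *
    ((algebraMap K[X] (RatFunc K) (Matrix.det (1 + (X : K[X]) • M.map C))) ^ n *
      (algebraMap K[X] (RatFunc K) (Matrix.det (1 - (X : K[X]) ^ 2 • M.map C)))⁻¹)

theorem exists_poincareSummand_eq_div (c : K) (M : Matrix (Fin r) (Fin r) K) :
    ∃ q : K[X], q.eval 1 ≠ 0 ∧ poincareSummand r n d c M =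
      algebraMap K[X] (RatFunc K)
          (C c * (∏ i, ∑ k ∈ Finset.range (d i), ((X : K[X]) ^ 2) ^ k) *
            (1 - X ^ 2) ^ (r - M.charpoly.rootMultiplicity 1) *
            Matrix.det (1 + (X : K[X]) • M.map C) ^ n) /
        algebraMap K[X] (RatFunc K) (q.comp (X ^ 2)) := by
  obtain ⟨q, hq1, hq⟩ := M.exists_charpolyRev_eq_one_sub_X_pow_mul
  set m := M.charpoly.rootMultiplicity 1
  have hm : m ≤ r := by simpa using M.rootMultiplicity_charpoly_le_card 1
  have hD : Matrix.det (1 - (X : K[X]) ^ 2 • M.map C) = (1 - X ^ 2) ^ m * q.comp (X ^ 2) := by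
    rw [Matrix.det_one_sub_smul_map_C_eq_comp, hq, mul_comp, pow_comp, sub_comp, one_comp,
      X_comp]
  have hpow : (1 - (X : K[X]) ^ 2) ^ r = (1 - X ^ 2) ^ (r - m) * (1 - X ^ 2) ^ m := by
    rw [← pow_add, Nat.sub_add_cancel hm]
  have hX : algebraMap K[X] (RatFunc K) (1 - X ^ 2) ≠ 0 :=
    RatFunc.algebraMap_ne_zero fun h => by simpa using congrArg (eval 0) h
  have hQ : algebraMap K[X] (RatFunc K) (q.comp (X ^ 2)) ≠ 0 :=
    RatFunc.algebraMap_ne_zero fun h => hq1 (by simpa using congrArg (eval 1) h)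
  refine ⟨q, hq1, ?_⟩
  rw [poincareSummand, prod_one_sub_X_pow_two_mul, hD, hpow]
  simp only [map_mul, map_pow, RatFunc.algebraMap_C]
  field_simp

theorem eval_denom_poincareSummand_ne_zero (c : K) (M : Matrix (Fin r) (Fin r) K) {a : K}
    (ha : a ^ 2 = 1) : (poincareSummand r n d c M).denom.eval a ≠ 0 := by
  obtain ⟨q, hq1, h⟩ := exists_poincareSummand_eq_div r n d c M
  rw [h]
  exact RatFunc.eval_denom_div_algebraMap_ne_zero (by simpa [eval_comp, ha] using hq1)

theorem eval_poincareSummand_eq_zero (c : K) {M : Matrix (Fin r) (Fin r) K}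
    (hM : M.charpoly.rootMultiplicity 1 < r) {a : K} (ha : a ^ 2 = 1) :
    RatFunc.eval (RingHom.id K) a (poincareSummand r n d c M) = 0 := by
  obtain ⟨q, hq1, h⟩ := exists_poincareSummand_eq_div r n d c M
  rw [h, RatFunc.eval_div_algebraMap (by simpa [eval_comp, ha] using hq1)]
  simp [ha, Nat.sub_ne_zero_of_lt hM]

theorem poincareSummand_one (c : K) :
    poincareSummand r n d c 1 =
      algebraMap K[X] (RatFunc K)
        (C c * (∏ i, ∑ k ∈ Finset.range (d i), ((X : K[X]) ^ 2) ^ k) * (1 + X) ^ (r * n)) := by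
  have hB : Matrix.det (1 + (X : K[X]) • (1 : Matrix (Fin r) (Fin r) K).map C) = (1 + X) ^ r := by
    rw [Matrix.map_one _ C_0 C_1, ← one_smul K[X] (1 : Matrix (Fin r) (Fin r) K[X]), smul_smul,
      mul_one, ← add_smul, Matrix.det_smul, Matrix.det_one, mul_one, Fintype.card_fin]
  have hD : Matrix.det (1 - (X : K[X]) ^ 2 • (1 : Matrix (Fin r) (Fin r) K).map C) =
      (1 - X ^ 2) ^ r := by
    rw [Matrix.map_one _ C_0 C_1, ← one_smul K[X] (1 : Matrix (Fin r) (Fin r) K[X]), smul_smul,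
      mul_one, ← sub_smul, Matrix.det_smul, Matrix.det_one, mul_one, Fintype.card_fin]
  have hX : algebraMap K[X] (RatFunc K) (1 - X ^ 2) ≠ 0 :=
    RatFunc.algebraMap_ne_zero fun h => by simpa using congrArg (eval 0) h
  rw [poincareSummand, hB, hD, prod_one_sub_X_pow_two_mul]
  simp only [map_mul, map_pow, RatFunc.algebraMap_C]
  field_simp
  ring

end Poincare

theorem poincareRatFunc_eq_sum (r n : ℕ) (W : Subgroup (Matrix.GeneralLinearGroup (Fin r) ℂ))
    [Fintype W] (d : Fin r → ℕ) :
    poincareRatFunc r n W d =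
      ∑ w : W, poincareSummand r n d (Fintype.card W : ℂ)⁻¹
        ((w : Matrix.GeneralLinearGroup (Fin r) ℂ) : Matrix (Fin r) (Fin r) ℂ) := by
  rw [poincareRatFunc, Finset.mul_sum]
  rfl

theorem poincareRatFunc_denom_eval_ne_zero_and_eval_eq (r n : ℕ)
    (W : Subgroup (Matrix.GeneralLinearGroup (Fin r) ℂ)) [Fintype W] (d : Fin r → ℕ)
    (hprod : ∏ i : Fin r, d i = Fintype.card W) {a : ℂ} (ha : a ^ 2 = 1) :
    (poincareRatFunc r n W d).denom.eval a ≠ 0 ∧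
      RatFunc.eval (RingHom.id ℂ) a (poincareRatFunc r n W d) = (1 + a) ^ (r * n) := by
  have hreg : ∀ w ∈ (Finset.univ : Finset W), (poincareSummand r n d (Fintype.card W : ℂ)⁻¹
      ((w : Matrix.GeneralLinearGroup (Fin r) ℂ) : Matrix (Fin r) (Fin r) ℂ)).denom.eval a ≠ 0 :=
    fun _ _ => eval_denom_poincareSummand_ne_zero r n d (Fintype.card W : ℂ)⁻¹ _ ha
  rw [poincareRatFunc_eq_sum]
  refine ⟨RatFunc.eval_denom_sum_ne_zero _ _ hreg, ?_⟩
  rw [RatFunc.eval_sum _ _ hreg, Finset.sum_eq_single 1]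
  · rw [OneMemClass.coe_one, Units.val_one, poincareSummand_one, RatFunc.eval_algebraMap]
    simp only [Algebra.algebraMap_self, RingHom.id_apply, eval₂_id, eval_mul, eval_C, eval_pow,
      eval_add, eval_one, eval_X, eval_prod_geom_sum _ _ ha]
    rw [← Nat.cast_prod, hprod, inv_mul_cancel₀ (Nat.cast_ne_zero.mpr Fintype.card_ne_zero),
      one_mul]
  · intro w _ hw
    refine eval_poincareSummand_eq_zero r n d _ ?_ ha
    simpa using Matrix.GeneralLinearGroup.rootMultiplicity_one_charpoly_lt
      (W.subtype.isOfFinOrder (isOfFinOrder_of_finite w)) (by simpa using hw)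
  · simp

theorem poincareRatFunc_eval_one_and_neg_one_general (r n : ℕ) (hr : 1 ≤ r) (hn : 1 ≤ n)
    (W : Subgroup (Matrix.GeneralLinearGroup (Fin r) ℂ)) [Fintype W]
    (d : Fin r → ℕ)
    (hprod : ∏ i : Fin r, d i = Fintype.card W) :
    Polynomial.eval 1 (RatFunc.denom (poincareRatFunc r n W d)) ≠ 0 ∧
    Polynomial.eval (-1) (RatFunc.denom (poincareRatFunc r n W d)) ≠ 0 ∧
    RatFunc.eval (RingHom.id ℂ) 1 (poincareRatFunc r n W d) = 2 ^ (r * n) ∧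
    RatFunc.eval (RingHom.id ℂ) (-1) (poincareRatFunc r n W d) = 0 := by
  obtain ⟨hden₁, heval₁⟩ :=
    poincareRatFunc_denom_eval_ne_zero_and_eval_eq r n W d hprod (one_pow 2)
  obtain ⟨hden₂, heval₂⟩ :=
    poincareRatFunc_denom_eval_ne_zero_and_eval_eq r n W d hprod neg_one_sq
  refine ⟨hden₁, hden₂, by rw [heval₁]; norm_num, ?_⟩
  rw [heval₂, add_neg_cancel, zero_pow (Nat.mul_ne_zero (by omega) (by omega))]

theorem poincareRatFunc_eval_one_and_neg_one (r n : ℕ) (hr : 1 ≤ r) (hn : 1 ≤ n)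
    (W : Subgroup (Matrix.GeneralLinearGroup (Fin r) ℂ)) [Fintype W]
    (d : Fin r → ℕ) (hd : ∀ i, 0 < d i)
    (hprod : ∏ i : Fin r, d i = Fintype.card W) :
    Polynomial.eval 1 (RatFunc.denom (poincareRatFunc r n W d)) ≠ 0 ∧
    Polynomial.eval (-1) (RatFunc.denom (poincareRatFunc r n W d)) ≠ 0 ∧
    RatFunc.eval (RingHom.id ℂ) 1 (poincareRatFunc r n W d) = 2 ^ (r * n) ∧
    RatFunc.eval (RingHom.id ℂ) (-1) (poincareRatFunc r n W d) = 0 :=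
  poincareRatFunc_eval_one_and_neg_one_general r n hr hn W d hprod
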